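/- Let ρ, u : ℝ × ℝ → ℝ be smooth (C²) functions, L-periodic in y for some L > 0, satisfying the modified coupled dispersionless system ρ_s + (u²)_y = 0 and u_{ys} = (2ρ − 1)u for all (y, s). Then the conserved quantity H_0 = ∫_0^L (2ρ(y, s) − 1) u(y, s)² dy is independent of s. In fact, ∂_s((2ρ − 1)u²) = ∂_y(u_s² − u⁴) pointwise. -/

import Mathlib

/-!
Using `ρ_s = -2 u u_y` and, by symmetry of second derivatives, `u_sy = u_ys = (2ρ - 1) u`,
`∂_s((2ρ - 1)u²) = 2ρ_s u² + 2(2ρ - 1) u u_s = -4u³u_y + 2u_s u_sy = ∂_y(u_s² - u⁴)`.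
Differentiating `H₀` under the integral sign then gives `H₀' = [u_s² - u⁴]₀ᴸ`, which vanishes
because `u` is `L`-periodic in `y`.
-/

open Function intervalIntegral

section PartialDerivatives

variable {𝕜 E : Type*} [NontriviallyNormedField 𝕜] [NormedAddCommGroup E] [NormedSpace 𝕜 E]
  {f : 𝕜 → 𝕜 → E}

theorem DifferentiableAt.hasDerivAt_uncurry_right {y s : 𝕜}
    (hf : DifferentiableAt 𝕜 (uncurry f) (y, s)) :
    HasDerivAt (fun y' => f y' s) (fderiv 𝕜 (uncurry f) (y, s) (1, 0)) y := by
  have := hf.hasFDerivAt.comp_hasDerivAt y ((hasDerivAt_id y).prodMk (hasDerivAt_const y s))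
  simp only [id_eq] at this
  exact this

theorem DifferentiableAt.hasDerivAt_uncurry_left {y s : 𝕜}
    (hf : DifferentiableAt 𝕜 (uncurry f) (y, s)) :
    HasDerivAt (f y) (fderiv 𝕜 (uncurry f) (y, s) (0, 1)) s :=
  hf.hasFDerivAt.comp_hasDerivAt s ((hasDerivAt_const s y).prodMk (hasDerivAt_id s))

theorem Differentiable.uncurry_left (y : 𝕜) (hf : Differentiable 𝕜 (uncurry f)) :
    Differentiable 𝕜 (f y) :=
  fun s => (hf (y, s)).hasDerivAt_uncurry_left.differentiableAt

theorem Differentiable.uncurry_right (s : 𝕜) (hf : Differentiable 𝕜 (uncurry f)) :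
    Differentiable 𝕜 (fun y => f y s) :=
  fun y => (hf (y, s)).hasDerivAt_uncurry_right.differentiableAt

theorem uncurry_deriv_fst_eq_fderiv (hf : Differentiable 𝕜 (uncurry f)) :
    uncurry (fun y s => deriv (fun y' => f y' s) y) = fun p => fderiv 𝕜 (uncurry f) p (1, 0) :=
  funext fun p => (hf p).hasDerivAt_uncurry_right.deriv

theorem uncurry_deriv_snd_eq_fderiv (hf : Differentiable 𝕜 (uncurry f)) :
    uncurry (fun y s => deriv (f y) s) = fun p => fderiv 𝕜 (uncurry f) p (0, 1) :=
  funext fun p => (hf p).hasDerivAt_uncurry_left.deriv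

variable {n : WithTop ℕ∞}

theorem ContDiff.uncurry_deriv_fst (hf : ContDiff 𝕜 (n + 1) (uncurry f)) :
    ContDiff 𝕜 n (uncurry fun y s => deriv (fun y' => f y' s) y) := by
  rw [uncurry_deriv_fst_eq_fderiv (hf.differentiable (by simp))]
  exact (hf.fderiv_right le_rfl).clm_apply contDiff_const

theorem ContDiff.uncurry_deriv_snd (hf : ContDiff 𝕜 (n + 1) (uncurry f)) :
    ContDiff 𝕜 n (uncurry fun y s => deriv (f y) s) := by
  rw [uncurry_deriv_snd_eq_fderiv (hf.differentiable (by simp))]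
  exact (hf.fderiv_right le_rfl).clm_apply contDiff_const

end PartialDerivatives

theorem ContDiff.deriv_deriv_comm {E : Type*} [NormedAddCommGroup E] [NormedSpace ℝ E]
    {f : ℝ → ℝ → E} (hf : ContDiff ℝ 2 (uncurry f)) (y s : ℝ) :
    deriv (fun s' => deriv (fun y' => f y' s') y) s = deriv (fun y' => deriv (f y') s) y := by
  have hF : Differentiable ℝ (uncurry f) := hf.differentiable (by simp)
  have hF' : Differentiable ℝ (fderiv ℝ (uncurry f)) :=
    (hf.fderiv_right (m := 1) (by norm_num)).differentiable (by simp)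
  have hpartial (v w : ℝ × ℝ) : fderiv ℝ (fun p => fderiv ℝ (uncurry f) p v) (y, s) w
      = fderiv ℝ (fderiv ℝ (uncurry f)) (y, s) w v := by
    rw [fderiv_clm_apply (hF' _) (differentiableAt_const v)]
    simp
  have hl := (hf.uncurry_deriv_fst (n := 1)).differentiable one_ne_zero
  have hr := (hf.uncurry_deriv_snd (n := 1)).differentiable one_ne_zero
  rw [(hl (y, s)).hasDerivAt_uncurry_left.deriv, (hr (y, s)).hasDerivAt_uncurry_right.deriv,
    uncurry_deriv_fst_eq_fderiv hF, uncurry_deriv_snd_eq_fderiv hF, hpartial, hpartial]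
  exact (hf.contDiffAt.isSymmSndFDerivAt (by simp)).eq _ _

section ConservationLaw

variable {E : Type*} [NormedAddCommGroup E] [NormedSpace ℝ E] {f g : ℝ → ℝ → E}

theorem hasDerivAt_intervalIntegral_of_contDiff (hf : ContDiff ℝ 1 (uncurry f)) (a b s₀ : ℝ) :
    HasDerivAt (fun s => ∫ y in a..b, f y s) (∫ y in a..b, deriv (f y) s₀) s₀ := by
  have hf' : Continuous (uncurry fun y s => deriv (f y) s) :=
    (hf.uncurry_deriv_snd (n := 0)).continuous
  obtain ⟨C, hC⟩ := (isCompact_uIcc.prod (isCompact_closedBall s₀ 1)).exists_bound_of_continuousOn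
    hf'.continuousOn
  refine (intervalIntegral.hasDerivAt_integral_of_dominated_loc_of_deriv_le (bound := fun _ => C)
    (Metric.ball_mem_nhds s₀ one_pos)
    (.of_forall fun s => (hf.continuous.uncurry_right s).aestronglyMeasurable)
    ((hf.continuous.uncurry_right s₀).intervalIntegrable a b)
    (hf'.uncurry_right s₀).aestronglyMeasurable
    (.of_forall fun y hy s hs =>
      hC (y, s) ⟨Set.uIoc_subset_uIcc hy, Metric.ball_subset_closedBall hs⟩)
    intervalIntegrable_const
    (.of_forall fun y _ s _ => ?_)).2
  exact ((hf.differentiable one_ne_zero).uncurry_left y s).hasDerivAt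

theorem intervalIntegral_eq_of_hasDerivAt_flux [CompleteSpace E] {a b : ℝ}
    (hf : ContDiff ℝ 1 (uncurry f))
    (hflux : ∀ y s, HasDerivAt (g · s) (deriv (f y) s) y) (hg : ∀ s, g b s = g a s)
    (s₁ s₂ : ℝ) : ∫ y in a..b, f y s₁ = ∫ y in a..b, f y s₂ := by
  have hderiv (s : ℝ) : HasDerivAt (fun s => ∫ y in a..b, f y s) 0 s := by
    convert hasDerivAt_intervalIntegral_of_contDiff hf a b s
    rw [integral_eq_sub_of_hasDerivAt (fun y _ => hflux y s), hg, sub_self]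
    exact ((hf.uncurry_deriv_snd (n := 0)).continuous.uncurry_right s).intervalIntegrable a b
  exact is_const_of_deriv_eq_zero (fun s => (hderiv s).differentiableAt)
    (fun s => (hderiv s).deriv) s₁ s₂

end ConservationLaw

section MCD

variable {ρ u : ℝ → ℝ → ℝ}

theorem MCD_density_hasDerivAt_flux (hρ : Differentiable ℝ (uncurry ρ))
    (hu : ContDiff ℝ 2 (uncurry u))
    (hMCD1 : ∀ y s : ℝ, deriv (fun s' => ρ y s') s + deriv (fun y' => (u y' s) ^ 2) y = 0)
    (hMCD2 : ∀ y s : ℝ, deriv (fun s' => deriv (fun y' => u y' s') y) s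
      = (2 * ρ y s - 1) * u y s) (y s : ℝ) :
    HasDerivAt (fun y' => (deriv (fun s' => u y' s') s) ^ 2 - (u y' s) ^ 4)
      (deriv (fun s' => (2 * ρ y s' - 1) * (u y s') ^ 2) s) y := by
  have hu₁ : Differentiable ℝ (uncurry u) := hu.differentiable (by simp)
  have hus : Differentiable ℝ (uncurry fun y s => deriv (u y) s) :=
    (hu.uncurry_deriv_snd (n := 1)).differentiable one_ne_zero
  have hρ_s := (hρ.uncurry_left y s).hasDerivAt
  have hu_s := (hu₁.uncurry_left y s).hasDerivAt
  have hu_y := (hu₁.uncurry_right s y).hasDerivAt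
  have hu_sy := (hus.uncurry_right s y).hasDerivAt
  have hρ_s_eq : deriv (ρ y) s = -(2 * u y s * deriv (u · s) y) := by
    linear_combination hMCD1 y s - (hu_y.pow 2).deriv
  have hu_sy_eq : deriv (fun y' => deriv (u y') s) y = (2 * ρ y s - 1) * u y s := by
    rw [← hMCD2 y s, hu.deriv_deriv_comm]
  have hdensity : deriv (fun s' => (2 * ρ y s' - 1) * (u y s') ^ 2) s
      = 2 * deriv (ρ y) s * u y s ^ 2 + (2 * ρ y s - 1) * (2 * u y s * deriv (u y) s) :=
    (((hρ_s.const_mul 2).sub_const 1).mul (hu_s.pow 2)).deriv.trans <| by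
      simp only [Pi.pow_apply]; push_cast; ring
  refine ((hu_sy.pow 2).sub (hu_y.pow 4)).congr_deriv ?_
  rw [hdensity, hu_sy_eq, hρ_s_eq]
  push_cast
  ring

end MCD

theorem MCD_H0_conserved_general
    (ρ u : ℝ → ℝ → ℝ) (L : ℝ)
    (hρ : ContDiff ℝ 2 (Function.uncurry ρ))
    (hu : ContDiff ℝ 2 (Function.uncurry u))
    (hperu : ∀ y s : ℝ, u (y + L) s = u y s)
    (hMCD1 : ∀ y s : ℝ, deriv (fun s' => ρ y s') s + deriv (fun y' => (u y' s) ^ 2) y = 0)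
    (hMCD2 : ∀ y s : ℝ, deriv (fun s' => deriv (fun y' => u y' s') y) s
      = (2 * ρ y s - 1) * u y s) :
    (∀ s₁ s₂ : ℝ,
      (∫ y in (0:ℝ)..L, (2 * ρ y s₁ - 1) * (u y s₁) ^ 2)
        = ∫ y in (0:ℝ)..L, (2 * ρ y s₂ - 1) * (u y s₂) ^ 2) ∧
    (∀ y s : ℝ,
      deriv (fun s' => (2 * ρ y s' - 1) * (u y s') ^ 2) s
        = deriv (fun y' => (deriv (fun s' => u y' s') s) ^ 2 - (u y' s) ^ 4) y) := by
  have hflux := MCD_density_hasDerivAt_flux (hρ.differentiable (by simp)) hu hMCD1 hMCD2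
  have hdensity : ContDiff ℝ 1 (uncurry fun y s => (2 * ρ y s - 1) * (u y s) ^ 2) :=
    (((contDiff_const.mul hρ).sub contDiff_const).mul (hu.pow 2)).of_le (by norm_num)
  have hperiodic (s : ℝ) : u L s = u 0 s := by simpa using hperu 0 s
  refine ⟨intervalIntegral_eq_of_hasDerivAt_flux hdensity hflux fun s => ?_,
    fun y s => (hflux y s).deriv.symm⟩
  simp only [hperiodic]

/-- **Conservation of `H₀ = ∫ (2ρ-1)u² dy` for the modified coupled dispersionless system.**
If `(ρ, u)` is a `C²`, `L`-periodic-in-`y` solution of `ρ_s + (u²)_y = 0`,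
`u_{ys} = (2ρ - 1)u`, then `∫_0^L (2ρ-1)u² dy` does not depend on `s`; in fact
`∂_s((2ρ-1)u²) = ∂_y(u_s² - u⁴)` pointwise. -/
theorem MCD_H0_conserved
    (ρ u : ℝ → ℝ → ℝ) (L : ℝ) (hL : 0 < L)
    (hρ : ContDiff ℝ 2 (Function.uncurry ρ))
    (hu : ContDiff ℝ 2 (Function.uncurry u))
    (hperρ : ∀ y s : ℝ, ρ (y + L) s = ρ y s)
    (hperu : ∀ y s : ℝ, u (y + L) s = u y s)
    (hMCD1 : ∀ y s : ℝ, deriv (fun s' => ρ y s') s + deriv (fun y' => (u y' s) ^ 2) y = 0)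
    (hMCD2 : ∀ y s : ℝ, deriv (fun s' => deriv (fun y' => u y' s') y) s
      = (2 * ρ y s - 1) * u y s) :
    (∀ s₁ s₂ : ℝ,
      (∫ y in (0:ℝ)..L, (2 * ρ y s₁ - 1) * (u y s₁) ^ 2)
        = ∫ y in (0:ℝ)..L, (2 * ρ y s₂ - 1) * (u y s₂) ^ 2) ∧
    (∀ y s : ℝ,
      deriv (fun s' => (2 * ρ y s' - 1) * (u y s') ^ 2) s
        = deriv (fun y' => (deriv (fun s' => u y' s') s) ^ 2 - (u y' s) ^ 4) y) :=
  MCD_H0_conserved_general ρ u L hρ hu hperu hMCD1 hMCD2
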